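/- With notation as above (T ⊆ [0,1), μ Borel probability measure, A^(k)_i, I(k), L = 2^(1/2)·5/4 < 2), assume that S := Σ_{k=1}^∞ 2^(-k) Σ_{i=0}^{4^k-1} (μ(A^(k)_i))^(1/2)·1[i ∈ I(k)] < ∞. Then Σ_{k=1}^∞ 2^(-k) Σ_{i=0}^{4^k-1} (μ(A^(k)_i))^(1/2) ≤ (1/(1-L/2))·(L + S), and consequently ∫_T ∫₀¹ (μ(B(t,r²)))^(-1/2) dr dμ(t) ≤ (1/(1-L/2))·(L + S). -/

import Mathlib

open MeasureTheory ENNReal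

/-- The level-`k` cell `A^{(k)}_i = [i·4^{-k}, (i+1)·4^{-k}) ∩ T`. -/
def Acell (T : Set ℝ) (k i : ℕ) : Set ℝ :=
  Set.Ico ((i : ℝ) * ((4:ℝ) ^ k)⁻¹) (((i : ℝ) + 1) * ((4:ℝ) ^ k)⁻¹) ∩ T

/-- `n = 4i+j ∈ I(k)`: the measure of `A^{(k-1)}_i` is well distributed among the children. -/
def goodIdx (T : Set ℝ) (μ : Measure ℝ) (k n : ℕ) : Prop :=
  if n % 4 = 0 ∨ n % 4 = 2 then
    (1/32) * μ (Acell T (k-1) (n / 4)) ≤ μ (Acell T k n) ∧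
      μ (Acell T k n) ≤ (1/2) * μ (Acell T k (4 * (n / 4)) ∪ Acell T k (4 * (n / 4) + 2))
  else
    (1/32) * μ (Acell T (k-1) (n / 4)) ≤ μ (Acell T k n) ∧
      μ (Acell T k n) ≤ (1/2) * μ (Acell T k (4 * (n / 4) + 1) ∪ Acell T k (4 * (n / 4) + 3))

/-!
Inside a parent cell `A^{(k)}_i`, a child failing the test `I(k+1)` is either light (mass below
`1/32` of the parent) or heavy (more than half the mass of its pair `{4i, 4i+2}` or
`{4i+1, 4i+3}`). A pair has at most one heavy child, so by `√p + √q ≤ √2 √(p+q)` the bad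
children contribute at most `L √μ(A^{(k)}_i)` with `L = 5√2/4`. Writing
`F k = ∑ᵢ μ(A^{(k)}_i)^{1/2}` (`sqrtMassSum`) and `G k` for its good part (`goodSqrtMassSum`),
this gives `F (k+1) ≤ G (k+1) + L F k` with `F 0 = 1`; weighted by `2^{-k}` it is a linear
recursion of ratio `L/2 < 1`, which sums to at most `(1 - L/2)⁻¹ (L/2 + S)`.

For the integral, at scale `r ∈ (2^{-k-1}, 2^{-k}]` the ball `B(t, r²)` contains the
level-`(k+1)` cell of `t`; integrating the resulting step function against `μ` gives back
`2^{-k-1} ∑ᵢ μ(A^{(k+1)}_i)^{1/2}`, since `μ(A)^{-1/2} μ(A) = μ(A)^{1/2}`.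
-/

theorem Finset.sum_range_mul_eq_sum_sum {M : Type*} [AddCommMonoid M] (f : ℕ → M) (a b : ℕ) :
    ∑ n ∈ range (a * b), f n = ∑ i ∈ range a, ∑ j ∈ range b, f (b * i + j) := by
  induction a with
  | zero => simp
  | succ a ih => rw [Nat.succ_mul, sum_range_add, ih, sum_range_succ, mul_comm b a]

lemma ENNReal.rpow_half_eq_ofReal_sqrt {a : ℝ≥0∞} (ha : a ≠ ⊤) :
    a ^ ((1:ℝ)/2) = ENNReal.ofReal √a.toReal := by
  rw [← ENNReal.ofReal_toReal ha, ENNReal.ofReal_rpow_of_nonneg ENNReal.toReal_nonneg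
    (by norm_num), Real.sqrt_eq_rpow, ENNReal.toReal_ofReal ENNReal.toReal_nonneg]

lemma ENNReal.rpow_neg_half_mul_self {a : ℝ≥0∞} (ha : a ≠ ⊤) :
    a ^ (-(1:ℝ)/2) * a = a ^ ((1:ℝ)/2) := by
  rcases eq_or_ne a 0 with rfl | h₀
  · simp
  · nth_rewrite 2 [← ENNReal.rpow_one a]
    rw [← ENNReal.rpow_add _ _ h₀ ha]
    norm_num

lemma ENNReal.rpow_le_rpow_of_nonpos {a b : ℝ≥0∞} {z : ℝ} (hz : z ≤ 0) (h : a ≤ b) :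
    b ^ z ≤ a ^ z := by
  obtain ⟨y, rfl⟩ : ∃ y, z = -y := ⟨-z, (neg_neg z).symm⟩
  rw [ENNReal.rpow_neg, ENNReal.rpow_neg]
  exact ENNReal.inv_le_inv.2 (ENNReal.rpow_le_rpow h (neg_nonpos.1 hz))

open Finset.HasAntidiagonal in
theorem ENNReal.tsum_mul_tsum_eq_tsum_sum_antidiagonal (f g : ℕ → ℝ≥0∞) :
    (∑' n, f n) * ∑' n, g n =
      ∑' n, ∑ p ∈ antidiagonal n, f p.1 * g p.2 := by
  rw [← ENNReal.tsum_mul_right]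
  simp_rw [← ENNReal.tsum_mul_left]
  rw [← ENNReal.tsum_prod, ← Finset.HasAntidiagonal.sigmaAntidiagonalEquivProd.tsum_eq,
    ENNReal.tsum_sigma']
  congr with n
  rw [← Finset.tsum_subtype]
  rfl

open Finset.HasAntidiagonal in
theorem ENNReal.tsum_succ_le_of_le_add_mul {P s : ℕ → ℝ≥0∞} {q : ℝ≥0∞} (h₀ : P 0 ≤ 1)
    (hrec : ∀ k, P (k + 1) ≤ s k + q * P k) :
    ∑' k, P (k + 1) ≤ (1 - q)⁻¹ * (q + ∑' k, s k) := by
  have hclosed : ∀ k,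
      P (k + 1) ≤ q ^ (k + 1) + ∑ p ∈ antidiagonal k, q ^ p.1 * s p.2 := by
    intro k
    induction k with
    | zero =>
      calc P 1 ≤ s 0 + q * P 0 := hrec 0
        _ ≤ s 0 + q * 1 := by gcongr
        _ = _ := by simp [add_comm]
    | succ k ih =>
      calc P (k + 2) ≤ s (k + 1) + q * P (k + 1) := hrec (k + 1)
        _ ≤ s (k + 1) + q * (q ^ (k + 1) + ∑ p ∈ antidiagonal k, q ^ p.1 * s p.2) := by
          gcongr
        _ = _ := by
          rw [Finset.Nat.sum_antidiagonal_succ, mul_add, Finset.mul_sum]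
          simp only [pow_succ', pow_zero, one_mul, mul_assoc]
          ring
  calc ∑' k, P (k + 1)
      ≤ ∑' k, (q ^ (k + 1) + ∑ p ∈ antidiagonal k, q ^ p.1 * s p.2) :=
        ENNReal.tsum_le_tsum hclosed
    _ = q * ∑' k, q ^ k + (∑' k, q ^ k) * ∑' k, s k := by
        rw [ENNReal.tsum_add, ENNReal.tsum_mul_tsum_eq_tsum_sum_antidiagonal]
        simp only [pow_succ', ENNReal.tsum_mul_left]
    _ = (1 - q)⁻¹ * (q + ∑' k, s k) := by rw [ENNReal.tsum_geometric]; ring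

lemma measure_Ico_eq_sum_range {α : Type*} [LinearOrder α] [MeasurableSpace α]
    [TopologicalSpace α] [OrderClosedTopology α] [OpensMeasurableSpace α] (μ : Measure α)
    {f : ℕ → α} (hf : Monotone f) (a n : ℕ) :
    μ (Set.Ico (f a) (f (a + n))) =
      ∑ j ∈ Finset.range n, μ (Set.Ico (f (a + j)) (f (a + j + 1))) := by
  induction n with
  | zero => simp
  | succ n ih =>
    rw [Finset.sum_range_succ, ← ih, ← add_assoc,
      ← Set.Ico_union_Ico_eq_Ico (hf (Nat.le_add_right a n)) (hf (Nat.le_succ _)),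
      measure_union Set.Ico_disjoint_Ico_same measurableSet_Ico]

lemma lintegral_Ioc_zero_one_le_tsum {f : ℝ → ℝ≥0∞} {g : ℕ → ℝ≥0∞}
    (h : ∀ k, ∀ r ∈ Set.Ioc ((2:ℝ)⁻¹ ^ (k + 1)) ((2:ℝ)⁻¹ ^ k), f r ≤ g k) :
    ∫⁻ r in Set.Ioc 0 1, f r ≤ ∑' k, 2⁻¹ ^ (k + 1) * g k := by
  have hcover : Set.Ioc (0:ℝ) 1 ⊆ ⋃ k, Set.Ioc ((2:ℝ)⁻¹ ^ (k + 1)) ((2:ℝ)⁻¹ ^ k) := fun r hr =>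
    Set.mem_iUnion.2 (exists_nat_pow_near_of_lt_one hr.1 hr.2 (by norm_num) (by norm_num))
  calc ∫⁻ r in Set.Ioc 0 1, f r
      ≤ ∫⁻ r in ⋃ k, Set.Ioc ((2:ℝ)⁻¹ ^ (k + 1)) ((2:ℝ)⁻¹ ^ k), f r := lintegral_mono_set hcover
    _ ≤ ∑' k, ∫⁻ r in Set.Ioc ((2:ℝ)⁻¹ ^ (k + 1)) ((2:ℝ)⁻¹ ^ k), f r := lintegral_iUnion_le _ _
    _ ≤ ∑' k, ∫⁻ r in Set.Ioc ((2:ℝ)⁻¹ ^ (k + 1)) ((2:ℝ)⁻¹ ^ k), g k :=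
        ENNReal.tsum_le_tsum fun k => setLIntegral_mono measurable_const (h k)
    _ = ∑' k, 2⁻¹ ^ (k + 1) * g k := by
        congr with k
        rw [setLIntegral_const, Real.volume_Ioc, mul_comm,
          show (2:ℝ)⁻¹ ^ k - 2⁻¹ ^ (k + 1) = 2⁻¹ ^ (k + 1) by ring,
          ENNReal.ofReal_pow (by norm_num), ENNReal.ofReal_inv_of_pos two_pos, ENNReal.ofReal_ofNat]

open Classical in
lemma pair_bad_sqrt_le {x y ε : ℝ} (hx : 0 ≤ x) (hy : 0 ≤ y) :
    (if ε ≤ x ∧ 2 * x ≤ x + y then 0 else √x) + (if ε ≤ y ∧ 2 * y ≤ x + y then 0 else √y) ≤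
      max √(x + y) √ε + √ε := by
  have hxs : √x ≤ √(x + y) := Real.sqrt_le_sqrt (by linarith)
  have hys : √y ≤ √(x + y) := Real.sqrt_le_sqrt (by linarith)
  have hsmall : ∀ z, z < ε → √z ≤ √ε := fun z hz => Real.sqrt_le_sqrt hz.le
  have := le_max_left √(x + y) √ε
  have := le_max_right √(x + y) √ε
  have := Real.sqrt_nonneg ε
  split_ifs with hgx hgy hgy
  · linarith
  · linarith
  · linarith
  · rw [not_and_or, not_le, not_le] at hgx hgy
    rcases hgx with hgx | hgx <;> rcases hgy with hgy | hgy
    · linarith [hsmall x hgx, hsmall y hgy]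
    · linarith [hsmall x hgx]
    · linarith [hsmall y hgy]
    · linarith

open Classical in
lemma four_bad_sqrt_le {x₀ x₁ x₂ x₃ m : ℝ} (h₀ : 0 ≤ x₀) (h₁ : 0 ≤ x₁) (h₂ : 0 ≤ x₂)
    (h₃ : 0 ≤ x₃) (hm : x₀ + x₁ + x₂ + x₃ = m) :
    (if m / 32 ≤ x₀ ∧ 2 * x₀ ≤ x₀ + x₂ then 0 else √x₀) +
      (if m / 32 ≤ x₁ ∧ 2 * x₁ ≤ x₁ + x₃ then 0 else √x₁) +
      (if m / 32 ≤ x₂ ∧ 2 * x₂ ≤ x₀ + x₂ then 0 else √x₂) +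
      (if m / 32 ≤ x₃ ∧ 2 * x₃ ≤ x₁ + x₃ then 0 else √x₃) ≤ √2 * (5 / 4) * √m := by
  have heven := pair_bad_sqrt_le (ε := m / 32) h₀ h₂
  have hodd := pair_bad_sqrt_le (ε := m / 32) h₁ h₃
  have hε : √(m / 32) = √2 / 8 * √m := by
    rw [show m / 32 = (√2 / 8) ^ 2 * m by rw [div_pow, Real.sq_sqrt zero_le_two]; ring,
      Real.sqrt_mul (by positivity), Real.sqrt_sq (by positivity)]
  have hp : √(x₀ + x₂) ^ 2 = x₀ + x₂ := Real.sq_sqrt (by positivity)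
  have hq : √(x₁ + x₃) ^ 2 = x₁ + x₃ := Real.sq_sqrt (by positivity)
  have hm2 : √m ^ 2 = m := Real.sq_sqrt (by linarith)
  have h2 : √2 ^ 2 = 2 := Real.sq_sqrt zero_le_two
  have := Real.sqrt_nonneg (x₀ + x₂)
  have := Real.sqrt_nonneg (x₁ + x₃)
  have := Real.sqrt_nonneg m
  have := Real.sqrt_nonneg 2
  have hpm : √(x₀ + x₂) ≤ √m := Real.sqrt_le_sqrt (by linarith)
  have hqm : √(x₁ + x₃) ≤ √m := Real.sqrt_le_sqrt (by linarith)
  have h87 : 8 ≤ 7 * √2 := by nlinarith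
  have hroots : √(x₀ + x₂) + √(x₁ + x₃) ≤ √2 * √m := by
    rw [← Real.sqrt_mul zero_le_two, Real.le_sqrt (by positivity) (by linarith)]
    nlinarith [sq_nonneg (√(x₀ + x₂) - √(x₁ + x₃))]
  have hmax : max √(x₀ + x₂) √(m / 32) + max √(x₁ + x₃) √(m / 32) ≤ √2 * √m := by
    rw [hε]
    rcases max_cases √(x₀ + x₂) (√2 / 8 * √m) with ⟨he, _⟩ | ⟨he, _⟩ <;>
      rcases max_cases √(x₁ + x₃) (√2 / 8 * √m) with ⟨ho, _⟩ | ⟨ho, _⟩ <;>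
      rw [he, ho] <;> nlinarith
  rw [hε] at heven hodd hmax
  linarith

def cell (k n : ℕ) : Set ℝ :=
  Set.Ico ((n : ℝ) * ((4:ℝ) ^ k)⁻¹) (((n : ℝ) + 1) * ((4:ℝ) ^ k)⁻¹)

lemma Acell_eq_cell_inter (T : Set ℝ) (k n : ℕ) : Acell T k n = cell k n ∩ T := rfl

lemma monotone_natCast_mul_inv_four_pow (k : ℕ) :
    Monotone fun n : ℕ => (n : ℝ) * ((4:ℝ) ^ k)⁻¹ :=
  fun _ _ h => mul_le_mul_of_nonneg_right (Nat.cast_le.2 h) (by positivity)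

lemma cell_eq_Ico_succ (k n : ℕ) :
    cell k n = Set.Ico ((n : ℝ) * ((4:ℝ) ^ k)⁻¹) (((n + 1 : ℕ) : ℝ) * ((4:ℝ) ^ k)⁻¹) := by
  rw [Nat.cast_succ]; rfl

lemma pairwise_disjoint_cell (k : ℕ) : Pairwise (Function.onFun Disjoint (cell k)) := by
  simpa only [Order.succ_eq_add_one, ← cell_eq_Ico_succ] using
    (monotone_natCast_mul_inv_four_pow k).pairwise_disjoint_on_Ico_succ

lemma measurableSet_cell (k n : ℕ) : MeasurableSet (cell k n) := measurableSet_Ico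

lemma measure_cell_eq_sum_children (μ : Measure ℝ) (k i : ℕ) :
    μ (cell k i) = ∑ j ∈ Finset.range 4, μ (cell (k + 1) (4 * i + j)) := by
  have hends : ∀ c : ℕ, (c : ℝ) * ((4:ℝ) ^ k)⁻¹ = ((4 * c : ℕ) : ℝ) * ((4:ℝ) ^ (k + 1))⁻¹ := by
    intro c; push_cast; rw [pow_succ]; field_simp
  rw [cell_eq_Ico_succ, hends, hends, show 4 * (i + 1) = 4 * i + 4 by ring,
    measure_Ico_eq_sum_range μ (monotone_natCast_mul_inv_four_pow (k + 1))]
  simp only [cell_eq_Ico_succ]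

lemma exists_mem_cell {t : ℝ} (ht : t ∈ Set.Ico 0 1) (k : ℕ) : ∃ n < 4 ^ k, t ∈ cell k n := by
  have h4 : (0:ℝ) < 4 ^ k := by positivity
  have ht0 : 0 ≤ t * 4 ^ k := mul_nonneg ht.1 h4.le
  refine ⟨⌊t * 4 ^ k⌋₊, ?_, ?_, ?_⟩
  · exact_mod_cast (Nat.floor_lt ht0).2 (by push_cast; nlinarith [ht.2])
  · rw [← div_eq_mul_inv, div_le_iff₀ h4]; exact Nat.floor_le ht0
  · rw [← div_eq_mul_inv, lt_div_iff₀ h4]; exact Nat.lt_floor_add_one _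

lemma abs_sub_lt_of_mem_cell {k n : ℕ} {s t : ℝ} (hs : s ∈ cell k n) (ht : t ∈ cell k n) :
    |s - t| < ((4:ℝ) ^ k)⁻¹ := by
  obtain ⟨hs₁, hs₂⟩ := hs
  obtain ⟨ht₁, ht₂⟩ := ht
  rw [abs_sub_lt_iff]
  constructor <;> linarith

noncomputable def sqrtMassSum (T : Set ℝ) (μ : Measure ℝ) (k : ℕ) : ℝ≥0∞ :=
  ∑ n ∈ Finset.range (4 ^ k), μ (Acell T k n) ^ ((1:ℝ)/2)

open Classical in
noncomputable def goodSqrtMassSum (T : Set ℝ) (μ : Measure ℝ) (k : ℕ) : ℝ≥0∞ :=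
  ∑ n ∈ Finset.range (4 ^ k), if goodIdx T μ k n then μ (Acell T k n) ^ ((1:ℝ)/2) else 0

noncomputable def invSqrtStep (T : Set ℝ) (μ : Measure ℝ) (k : ℕ) (t : ℝ) : ℝ≥0∞ :=
  ∑ n ∈ Finset.range (4 ^ k), (cell k n).indicator (fun _ => μ (Acell T k n) ^ (-(1:ℝ)/2)) t

lemma sqrtMassSum_zero {T : Set ℝ} {μ : Measure ℝ} (hT : T ⊆ Set.Ico 0 1) (hμT : μ T = 1) :
    sqrtMassSum T μ 0 = 1 := by
  have hA : Acell T 0 0 = T := Set.inter_eq_right.2 (by simpa using hT)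
  simp [sqrtMassSum, hA, hμT]

section

variable {T : Set ℝ} {μ : Measure ℝ}

lemma measurable_invSqrtStep (k : ℕ) : Measurable (invSqrtStep T μ k) :=
  Finset.measurable_sum _ fun n _ => measurable_const.indicator (measurableSet_cell k n)

lemma lintegral_invSqrtStep [IsFiniteMeasure μ] (k : ℕ) :
    ∫⁻ t in T, invSqrtStep T μ k t ∂μ = sqrtMassSum T μ k := by
  unfold invSqrtStep sqrtMassSum
  rw [lintegral_finsetSum _ fun n _ => measurable_const.indicator (measurableSet_cell k n)]
  refine Finset.sum_congr rfl fun n _ => ?_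
  rw [lintegral_indicator (measurableSet_cell k n), setLIntegral_const,
    Measure.restrict_apply (measurableSet_cell k n), ← Acell_eq_cell_inter,
    ENNReal.rpow_neg_half_mul_self (measure_ne_top μ _)]

lemma rpow_neg_half_measure_le_invSqrtStep {k : ℕ} {t ρ : ℝ} (ht : t ∈ Set.Ico 0 1)
    (hρ : ((4:ℝ) ^ k)⁻¹ ≤ ρ) :
    μ {s | s ∈ T ∧ |s - t| ≤ ρ} ^ (-(1:ℝ)/2) ≤ invSqrtStep T μ k t := by
  obtain ⟨n, hn, htn⟩ := exists_mem_cell ht k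
  have hsub : Acell T k n ⊆ {s | s ∈ T ∧ |s - t| ≤ ρ} := fun s ⟨hs, hsT⟩ =>
    ⟨hsT, (abs_sub_lt_of_mem_cell hs htn).le.trans hρ⟩
  calc μ {s | s ∈ T ∧ |s - t| ≤ ρ} ^ (-(1:ℝ)/2)
      ≤ μ (Acell T k n) ^ (-(1:ℝ)/2) :=
        ENNReal.rpow_le_rpow_of_nonpos (by norm_num) (measure_mono hsub)
    _ = (cell k n).indicator (fun _ => μ (Acell T k n) ^ (-(1:ℝ)/2)) t :=
        (Set.indicator_of_mem htn (fun _ => μ (Acell T k n) ^ (-(1:ℝ)/2))).symm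
    _ ≤ invSqrtStep T μ k t :=
        Finset.single_le_sum (f := fun n => (cell k n).indicator
          (fun _ => μ (Acell T k n) ^ (-(1:ℝ)/2)) t) (fun _ _ => bot_le) (Finset.mem_range.2 hn)

lemma lintegral_lintegral_rpow_neg_half_le [IsFiniteMeasure μ] (hT : T ⊆ Set.Ico 0 1) :
    ∫⁻ t in T, (∫⁻ r in Set.Ioc (0:ℝ) 1, μ {s | s ∈ T ∧ |s - t| ≤ r ^ 2} ^ (-(1:ℝ)/2)) ∂μ ≤
      ∑' k, 2⁻¹ ^ (k + 1) * sqrtMassSum T μ (k + 1) := by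
  have hmeas : ∀ k, Measurable fun t => 2⁻¹ ^ (k + 1) * invSqrtStep T μ (k + 1) t :=
    fun k => (measurable_invSqrtStep (k + 1)).const_mul _
  calc ∫⁻ t in T, (∫⁻ r in Set.Ioc (0:ℝ) 1, μ {s | s ∈ T ∧ |s - t| ≤ r ^ 2} ^ (-(1:ℝ)/2)) ∂μ
      ≤ ∫⁻ t in T, ∑' k, 2⁻¹ ^ (k + 1) * invSqrtStep T μ (k + 1) t ∂μ := by
        refine setLIntegral_mono (Measurable.tsum hmeas) fun t ht =>
          lintegral_Ioc_zero_one_le_tsum fun k r hr =>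
            rpow_neg_half_measure_le_invSqrtStep (hT ht) ?_
        calc ((4:ℝ) ^ (k + 1))⁻¹ = ((2:ℝ)⁻¹ ^ (k + 1)) ^ 2 := by
              rw [← pow_mul, mul_comm, pow_mul, ← inv_pow]; norm_num
          _ ≤ r ^ 2 := by gcongr; exact hr.1.le
    _ = ∑' k, 2⁻¹ ^ (k + 1) * ∫⁻ t in T, invSqrtStep T μ (k + 1) t ∂μ := by
        rw [lintegral_tsum fun k => (hmeas k).aemeasurable]
        congr with k
        exact lintegral_const_mul _ (measurable_invSqrtStep (k + 1))
    _ = _ := by simp_rw [lintegral_invSqrtStep]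

end

section ProbabilityMeasure

variable {μ : Measure ℝ} [IsProbabilityMeasure μ] {T : Set ℝ}

lemma measure_inter_of_measure_eq_one (hμT : μ T = 1) {s : Set ℝ} (hs : MeasurableSet s) :
    μ (s ∩ T) = μ s := by
  rw [Set.inter_comm, Measure.measure_inter_eq_of_measure_eq hs (hμT.trans measure_univ.symm)
    (Set.subset_univ T) (measure_ne_top μ T), Set.univ_inter]

lemma measure_Acell (hμT : μ T = 1) (k n : ℕ) : μ (Acell T k n) = μ (cell k n) :=
  measure_inter_of_measure_eq_one hμT (measurableSet_cell k n)

lemma measure_Acell_union (hμT : μ T = 1) {k m n : ℕ} (hmn : m ≠ n) :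
    μ (Acell T k m ∪ Acell T k n) = μ (Acell T k m) + μ (Acell T k n) := by
  rw [measure_Acell hμT, measure_Acell hμT, Acell_eq_cell_inter, Acell_eq_cell_inter,
    ← Set.union_inter_distrib_right,
    measure_inter_of_measure_eq_one hμT ((measurableSet_cell k m).union (measurableSet_cell k n)),
    measure_union (pairwise_disjoint_cell k hmn) (measurableSet_cell k n)]

lemma goodIdx_four_mul_add_iff (hμT : μ T = 1) (k i : ℕ) {j : ℕ} (hj : j < 4) :
    goodIdx T μ (k + 1) (4 * i + j) ↔
      μ.real (Acell T k i) / 32 ≤ μ.real (Acell T (k + 1) (4 * i + j)) ∧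
      2 * μ.real (Acell T (k + 1) (4 * i + j)) ≤
        μ.real (Acell T (k + 1) (4 * i + j % 2)) +
          μ.real (Acell T (k + 1) (4 * i + (j % 2 + 2))) := by
  have hunfold : goodIdx T μ (k + 1) (4 * i + j) ↔
      (1/32) * μ (Acell T k i) ≤ μ (Acell T (k + 1) (4 * i + j)) ∧
      μ (Acell T (k + 1) (4 * i + j)) ≤
        (1/2) * μ (Acell T (k + 1) (4 * i + j % 2) ∪ Acell T (k + 1) (4 * i + (j % 2 + 2))) := by
    unfold goodIdx
    rw [show (4 * i + j) / 4 = i by omega, show (4 * i + j) % 4 = j by omega, Nat.add_sub_cancel]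
    interval_cases j <;> simp
  have htoReal : ∀ {a b c : ℝ≥0∞}, a ≠ ⊤ → b ≠ ⊤ → c ≠ ⊤ →
      ((1/32) * a ≤ b ∧ b ≤ (1/2) * c ↔ a.toReal / 32 ≤ b.toReal ∧ 2 * b.toReal ≤ c.toReal) := by
    intro a b c ha hb hc
    rw [← ENNReal.toReal_le_toReal (by finiteness) hb,
      ← ENNReal.toReal_le_toReal hb (by finiteness)]
    simp only [ENNReal.toReal_mul, one_div, ENNReal.toReal_inv, ENNReal.toReal_ofNat]
    constructor <;> rintro ⟨h₁, h₂⟩ <;> constructor <;> linarith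
  rw [hunfold, measure_Acell_union hμT (by omega), htoReal (by finiteness) (by finiteness)
    (by finiteness), ENNReal.toReal_add (by finiteness) (by finiteness)]
  simp only [← measureReal_def]

lemma measureReal_Acell_eq_sum_children (hμT : μ T = 1) (k i : ℕ) :
    μ.real (Acell T k i) = ∑ j ∈ Finset.range 4, μ.real (Acell T (k + 1) (4 * i + j)) := by
  simp only [measureReal_def, measure_Acell hμT]
  rw [measure_cell_eq_sum_children, ENNReal.toReal_sum (fun _ _ => measure_ne_top μ _)]

open Classical in
lemma sum_bad_children_le (hμT : μ T = 1) (k i : ℕ) :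
    ∑ j ∈ Finset.range 4, (if goodIdx T μ (k + 1) (4 * i + j) then 0
        else μ (Acell T (k + 1) (4 * i + j)) ^ ((1:ℝ)/2)) ≤
      ENNReal.ofReal (√2 * (5/4)) * μ (Acell T k i) ^ ((1:ℝ)/2) := by
  have hreal : ∀ n, (if goodIdx T μ (k + 1) n then 0 else μ (Acell T (k + 1) n) ^ ((1:ℝ)/2)) =
      ENNReal.ofReal (if goodIdx T μ (k + 1) n then 0 else √(μ.real (Acell T (k + 1) n))) := by
    intro n
    split_ifs
    · exact ENNReal.ofReal_zero.symm
    · exact ENNReal.rpow_half_eq_ofReal_sqrt (measure_ne_top μ _)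
  simp_rw [hreal]
  rw [← ENNReal.ofReal_sum_of_nonneg (fun _ _ => by split_ifs <;> positivity),
    ENNReal.rpow_half_eq_ofReal_sqrt (measure_ne_top μ _), ← ENNReal.ofReal_mul (by positivity)]
  apply ENNReal.ofReal_le_ofReal
  have hsum := measureReal_Acell_eq_sum_children hμT k i
  simp only [Finset.sum_range_succ, Finset.sum_range_zero, zero_add] at hsum ⊢
  simp only [goodIdx_four_mul_add_iff hμT k i (by norm_num : (0:ℕ) < 4),
    goodIdx_four_mul_add_iff hμT k i (by norm_num : (1:ℕ) < 4),
    goodIdx_four_mul_add_iff hμT k i (by norm_num : (2:ℕ) < 4),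
    goodIdx_four_mul_add_iff hμT k i (by norm_num : (3:ℕ) < 4)]
  simp only [Nat.reduceMod, Nat.reduceAdd, add_zero, ← measureReal_def] at hsum ⊢
  exact four_bad_sqrt_le measureReal_nonneg measureReal_nonneg measureReal_nonneg
    measureReal_nonneg hsum.symm

open Classical in
lemma sqrtMassSum_succ_le (hμT : μ T = 1) (k : ℕ) :
    sqrtMassSum T μ (k + 1) ≤
      goodSqrtMassSum T μ (k + 1) + ENNReal.ofReal (√2 * (5/4)) * sqrtMassSum T μ k := by
  have hsplit : sqrtMassSum T μ (k + 1) = goodSqrtMassSum T μ (k + 1) +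
      ∑ n ∈ Finset.range (4 ^ (k + 1)),
        if goodIdx T μ (k + 1) n then 0 else μ (Acell T (k + 1) n) ^ ((1:ℝ)/2) := by
    rw [sqrtMassSum, goodSqrtMassSum, ← Finset.sum_add_distrib]
    exact Finset.sum_congr rfl fun n _ => by split_ifs <;> simp
  rw [hsplit, sqrtMassSum, pow_succ, Finset.sum_range_mul_eq_sum_sum, Finset.mul_sum]
  gcongr with i
  exact sum_bad_children_le hμT k i

lemma tsum_sqrtMassSum_le (hT : T ⊆ Set.Ico 0 1) (hμT : μ T = 1) :
    ∑' k, 2⁻¹ ^ (k + 1) * sqrtMassSum T μ (k + 1) ≤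
      (1 - ENNReal.ofReal (√2 * (5/4) / 2))⁻¹ *
        (ENNReal.ofReal (√2 * (5/4) / 2) + ∑' k, 2⁻¹ ^ (k + 1) * goodSqrtMassSum T μ (k + 1)) := by
  refine ENNReal.tsum_succ_le_of_le_add_mul (P := fun k => 2⁻¹ ^ k * sqrtMassSum T μ k)
    (by simp [sqrtMassSum_zero hT hμT]) fun k => ?_
  have hhalf : 2⁻¹ ^ (k + 1) * ENNReal.ofReal (√2 * (5/4)) =
      ENNReal.ofReal (√2 * (5/4) / 2) * 2⁻¹ ^ k := by
    rw [ENNReal.ofReal_div_of_pos two_pos, ENNReal.ofReal_ofNat, pow_succ, ENNReal.div_eq_inv_mul]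
    ring
  calc 2⁻¹ ^ (k + 1) * sqrtMassSum T μ (k + 1)
      ≤ 2⁻¹ ^ (k + 1) * (goodSqrtMassSum T μ (k + 1) +
          ENNReal.ofReal (√2 * (5/4)) * sqrtMassSum T μ k) := by
        gcongr; exact sqrtMassSum_succ_le hμT k
    _ = _ := by rw [mul_add, ← mul_assoc, hhalf, mul_assoc]

end ProbabilityMeasure

open Classical in
theorem stmt8_general (T : Set ℝ) (hT : T ⊆ Set.Ico (0:ℝ) 1)
    (μ : Measure ℝ) [IsProbabilityMeasure μ] (hμT : μ T = 1)
    (S : ℝ≥0∞)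
    (hS : S = ∑' k : ℕ, 2⁻¹ ^ (k + 1) *
      ∑ n ∈ Finset.range (4 ^ (k + 1)),
        (if goodIdx T μ (k + 1) n then (μ (Acell T (k+1) n)) ^ ((1:ℝ)/2) else 0)) :
    (∑' k : ℕ, 2⁻¹ ^ (k + 1) *
        ∑ n ∈ Finset.range (4 ^ (k + 1)), (μ (Acell T (k+1) n)) ^ ((1:ℝ)/2)) ≤
      ENNReal.ofReal (1 / (1 - Real.sqrt 2 * (5/4) / 2)) *
        (ENNReal.ofReal (Real.sqrt 2 * (5/4)) + S) ∧
    (∫⁻ t in T, (∫⁻ r in Set.Ioc (0:ℝ) 1,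
        (μ {s | s ∈ T ∧ |s - t| ≤ r ^ 2}) ^ (-(1:ℝ)/2)) ∂μ) ≤
      ENNReal.ofReal (1 / (1 - Real.sqrt 2 * (5/4) / 2)) *
        (ENNReal.ofReal (Real.sqrt 2 * (5/4)) + S) := by
  obtain rfl : S = ∑' k, 2⁻¹ ^ (k + 1) * goodSqrtMassSum T μ (k + 1) := hS
  have hL : √2 * (5/4) / 2 < 1 := by
    nlinarith [Real.sq_sqrt (zero_le_two : (0:ℝ) ≤ 2), Real.sqrt_nonneg 2]
  have hconst : (1 - ENNReal.ofReal (√2 * (5/4) / 2))⁻¹ =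
      ENNReal.ofReal (1 / (1 - √2 * (5/4) / 2)) := by
    rw [← ENNReal.ofReal_one, ← ENNReal.ofReal_sub 1 (q := √2 * (5/4) / 2) (by positivity),
      one_div, ENNReal.ofReal_inv_of_pos (by linarith)]
  have hlevels : ∑' k, 2⁻¹ ^ (k + 1) * sqrtMassSum T μ (k + 1) ≤
      ENNReal.ofReal (1 / (1 - √2 * (5/4) / 2)) *
        (ENNReal.ofReal (√2 * (5/4)) + ∑' k, 2⁻¹ ^ (k + 1) * goodSqrtMassSum T μ (k + 1)) := by
    refine (tsum_sqrtMassSum_le hT hμT).trans ?_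
    rw [hconst]
    gcongr
    exact half_le_self (by positivity)
  exact ⟨hlevels, (lintegral_lintegral_rpow_neg_half_le hT).trans hlevels⟩

open Classical in
theorem stmt8 (T : Set ℝ) (hT : T ⊆ Set.Ico (0:ℝ) 1) (hTne : T.Nonempty)
    (μ : Measure ℝ) [IsProbabilityMeasure μ] (hμT : μ T = 1)
    (S : ℝ≥0∞)
    (hS : S = ∑' k : ℕ, 2⁻¹ ^ (k + 1) *
      ∑ n ∈ Finset.range (4 ^ (k + 1)),
        (if goodIdx T μ (k + 1) n then (μ (Acell T (k+1) n)) ^ ((1:ℝ)/2) else 0))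
    (hSfin : S ≠ ⊤) :
    (∑' k : ℕ, 2⁻¹ ^ (k + 1) *
        ∑ n ∈ Finset.range (4 ^ (k + 1)), (μ (Acell T (k+1) n)) ^ ((1:ℝ)/2)) ≤
      ENNReal.ofReal (1 / (1 - Real.sqrt 2 * (5/4) / 2)) *
        (ENNReal.ofReal (Real.sqrt 2 * (5/4)) + S) ∧
    (∫⁻ t in T, (∫⁻ r in Set.Ioc (0:ℝ) 1,
        (μ {s | s ∈ T ∧ |s - t| ≤ r ^ 2}) ^ (-(1:ℝ)/2)) ∂μ) ≤
      ENNReal.ofReal (1 / (1 - Real.sqrt 2 * (5/4) / 2)) *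
        (ENNReal.ofReal (Real.sqrt 2 * (5/4)) + S) :=
  stmt8_general T hT μ hμT S hS
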